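/- arXiv:1909.05396 — 3 statements merged into one kernel-verified Lean document; each statement's English description precedes it below -/
import Mathlib

section
/- For every n ∈ ℕ, every finite signed Borel measure μ on X, and every λ̄ ∈ (ᾱ, ∞), the map λ ↦ μP_λ^n (the n-fold iterate of the Markov operator P_λ applied to μ) is continuous at λ̄ in the Fortet–Mourier norm: ‖μP_λ^n − μP_{λ̄}^n‖_FM → 0 as λ → λ̄ within (ᾱ, ∞). -/
/-!
On bounded measurable functions, `P_λ g (x) = ∫₀^∞ λ e^{-λt} (J g)(S(t,x)) dt` with
`J g (y) = ∫ p(y,θ) g(w_θ y) dθ` averages `g` against probability weights, so it is a contraction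
for the sup norm, and for `‖g‖_∞ ≤ 1`
`‖P_λ g - P_λ' g‖_∞ ≤ ∫₀^∞ |λ e^{-λt} - λ' e^{-λ't}| dt ≤ 2 |λ - λ'| / min λ λ'`.
Telescoping gives `‖P_λ^n f - P_λ'^n f‖_∞ ≤ 2 n |λ - λ'| / min λ λ'`, and pairing with `μ` costs
the factor `‖μ‖_TV`; so `μ P_λ^n → μ P_λ̄^n` even in total variation.
-/

open MeasureTheory Real Filter

/-- The integral of a real-valued function against a finite signed measure,
defined through the Jordan decomposition. -/
noncomputable def sInt {α : Type*} [MeasurableSpace α]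
    (μ : MeasureTheory.SignedMeasure α) (f : α → ℝ) : ℝ :=
  (∫ x, f x ∂μ.toJordanDecomposition.posPart) -
    ∫ x, f x ∂μ.toJordanDecomposition.negPart

open Set

section WeightedIntegral

variable {α : Type*} [MeasurableSpace α] {ν : Measure α} {ρ φ ψ : α → ℝ} {C ε : ℝ}

theorem integral_abs_eq_one_of_nonneg (hρ0 : ∀ x, 0 ≤ ρ x) (hρ1 : ∫ x, ρ x ∂ν = 1) :
    ∫ x, |ρ x| ∂ν = 1 := by
  simp_rw [abs_of_nonneg (hρ0 _), hρ1]

theorem abs_integral_mul_le_of_abs_le (hρ : Integrable ρ ν) (hφ : ∀ x, |φ x| ≤ C) :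
    |∫ x, ρ x * φ x ∂ν| ≤ C * ∫ x, |ρ x| ∂ν := by
  rw [← integral_const_mul]
  refine (abs_integral_le_integral_abs).trans <|
    integral_mono_of_nonneg (ae_of_all _ fun x => abs_nonneg _) (hρ.abs.const_mul C)
      (ae_of_all _ fun x => ?_)
  dsimp only
  rw [abs_mul, mul_comm C]
  exact mul_le_mul_of_nonneg_left (hφ x) (abs_nonneg _)

theorem abs_integral_mul_sub_integral_mul_le (hρ : Integrable ρ ν)
    (hφ : AEStronglyMeasurable φ ν) (hψ : AEStronglyMeasurable ψ ν)
    (hφC : ∀ x, |φ x| ≤ C) (hψC : ∀ x, |ψ x| ≤ C) (hε : ∀ x, |φ x - ψ x| ≤ ε) :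
    |∫ x, ρ x * φ x ∂ν - ∫ x, ρ x * ψ x ∂ν| ≤ ε * ∫ x, |ρ x| ∂ν := by
  have hρφ := hρ.mul_bdd hφ (c := C) (ae_of_all _ hφC)
  have hρψ := hρ.mul_bdd hψ (c := C) (ae_of_all _ hψC)
  rw [← integral_sub hρφ hρψ]
  simpa only [mul_sub] using abs_integral_mul_le_of_abs_le hρ hε

end WeightedIntegral

section SignedIntegral

variable {α : Type*} [MeasurableSpace α] (μ : SignedMeasure α) {f g : α → ℝ} {C : ℝ}

theorem sInt_sub (hf : Integrable f μ.totalVariation) (hg : Integrable g μ.totalVariation) :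
    sInt μ (f - g) = sInt μ f - sInt μ g := by
  have hpos : μ.toJordanDecomposition.posPart ≤ μ.totalVariation := Measure.le_add_right le_rfl
  have hneg : μ.toJordanDecomposition.negPart ≤ μ.totalVariation := Measure.le_add_left le_rfl
  simp only [sInt, Pi.sub_apply, integral_sub (hf.mono_measure hpos) (hg.mono_measure hpos),
    integral_sub (hf.mono_measure hneg) (hg.mono_measure hneg)]
  ring

theorem abs_sInt_le_of_abs_le (hf : ∀ x, |f x| ≤ C) :
    |sInt μ f| ≤ C * μ.totalVariation.real univ := by
  have bound (ν : Measure α) [IsFiniteMeasure ν] : |∫ x, f x ∂ν| ≤ C * ν.real univ :=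
    norm_integral_le_of_norm_le_const <| ae_of_all _ fun x =>
      (Real.norm_eq_abs (f x)).trans_le (hf x)
  rw [SignedMeasure.totalVariation, measureReal_add_apply, mul_add]
  exact (abs_sub _ _).trans (add_le_add (bound _) (bound _))

theorem abs_sInt_sub_sInt_le (hf : Measurable f) (hg : Measurable g) (hfC : ∀ x, |f x| ≤ C)
    (hgC : ∀ x, |g x| ≤ C) {D : ℝ} (hD : ∀ x, |f x - g x| ≤ D) :
    |sInt μ f - sInt μ g| ≤ D * μ.totalVariation.real univ := by
  have integrable {h : α → ℝ} (hh : Measurable h) (hhC : ∀ x, |h x| ≤ C) :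
      Integrable h μ.totalVariation :=
    .of_bound hh.aestronglyMeasurable C (ae_of_all _ hhC)
  rw [← sInt_sub μ (integrable hf hfC) (integrable hg hgC)]
  exact abs_sInt_le_of_abs_le μ hD

end SignedIntegral

theorem abs_iterate_sub_iterate_le {α : Type*} {s : Set (α → ℝ)} {T U : (α → ℝ) → α → ℝ}
    {δ : ℝ} (hTs : MapsTo T s s) (hUs : MapsTo U s s)
    (hT : ∀ g ∈ s, ∀ h ∈ s, ∀ ε, (∀ z, |g z - h z| ≤ ε) → ∀ z, |T g z - T h z| ≤ ε)
    (hTU : ∀ g ∈ s, ∀ z, |T g z - U g z| ≤ δ) (n : ℕ) {f : α → ℝ} (hf : f ∈ s) (z : α) :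
    |T^[n] f z - U^[n] f z| ≤ n * δ := by
  induction n generalizing z with
  | zero => simp
  | succ n ih =>
    rw [Function.iterate_succ_apply', Function.iterate_succ_apply']
    calc |T (T^[n] f) z - U (U^[n] f) z|
        ≤ |T (T^[n] f) z - T (U^[n] f) z| + |T (U^[n] f) z - U (U^[n] f) z| := abs_sub_le _ _ _
      _ ≤ n * δ + δ :=
        add_le_add (hT _ (hTs.iterate n hf) _ (hUs.iterate n hf) _ ih z)
          (hTU _ (hUs.iterate n hf) z)
      _ = (n + 1 : ℕ) * δ := by push_cast; ring

section ExponentialAverage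

noncomputable def expDensity (l t : ℝ) : ℝ := l * exp (-(l * t))

noncomputable def expAvg (l : ℝ) (φ : ℝ → ℝ) : ℝ := ∫ t in Ici 0, expDensity l t * φ t

variable {a b l : ℝ} {φ ψ : ℝ → ℝ} {C ε : ℝ}

theorem expDensity_nonneg (hl : 0 < l) (t : ℝ) : 0 ≤ expDensity l t := by
  unfold expDensity; positivity

theorem integrableOn_expDensity (hl : 0 < l) : IntegrableOn (expDensity l) (Ici 0) := by
  rw [integrableOn_Ici_iff_integrableOn_Ioi]
  have := (integrableOn_exp_mul_Ioi (neg_neg_of_pos hl) 0).const_mul l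
  simp only [neg_mul] at this
  exact this

theorem integral_expDensity (hl : 0 < l) : ∫ t in Ici 0, expDensity l t = 1 := by
  rw [integral_Ici_eq_integral_Ioi]
  simp only [expDensity, ← neg_mul]
  rw [integral_const_mul, integral_exp_mul_Ioi (neg_neg_of_pos hl)]
  field_simp
  simp

theorem integral_abs_expDensity (hl : 0 < l) : ∫ t in Ici 0, |expDensity l t| = 1 :=
  integral_abs_eq_one_of_nonneg (expDensity_nonneg hl) (integral_expDensity hl)

theorem integral_abs_expDensity_sub_le (ha : 0 < a) (hb : 0 < b) :
    ∫ t in Ici 0, |expDensity a t - expDensity b t| ≤ 2 * |a - b| / min a b := by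
  wlog hab : a ≤ b generalizing a b
  · simpa only [abs_sub_comm, min_comm] using this hb ha (le_of_not_ge hab)
  -- `c` is chosen so that `|ρ_a - ρ_b| ≤ c ρ_a - ρ_b` pointwise; integrating gives `c - 1`.
  set c := (2 * b - a) / a with hc
  have pointwise (t : ℝ) (ht : t ∈ Ici 0) :
      |expDensity a t - expDensity b t| ≤ c * expDensity a t - expDensity b t := by
    have hexp : exp (-(b * t)) ≤ exp (-(a * t)) := by gcongr
    have hca : c * expDensity a t = (2 * b - a) * exp (-(a * t)) := by
      rw [hc, expDensity]; field_simp
    rw [hca, expDensity, expDensity, abs_le]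
    constructor <;> nlinarith [mul_le_mul_of_nonneg_left hexp hb.le, exp_pos (-(a * t))]
  calc ∫ t in Ici 0, |expDensity a t - expDensity b t|
      ≤ ∫ t in Ici 0, (c * expDensity a t - expDensity b t) :=
        setIntegral_mono_on ((integrableOn_expDensity ha).sub (integrableOn_expDensity hb)).abs
          (((integrableOn_expDensity ha).const_mul c).sub (integrableOn_expDensity hb))
          measurableSet_Ici pointwise
    _ = c - 1 := by
        rw [integral_sub ((integrableOn_expDensity ha).const_mul c) (integrableOn_expDensity hb),
          integral_const_mul, integral_expDensity ha, integral_expDensity hb, mul_one]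
    _ = 2 * |a - b| / min a b := by
        rw [abs_sub_comm, abs_of_nonneg (sub_nonneg.2 hab), min_eq_left hab, hc]
        field_simp; ring

theorem abs_expAvg_le (hl : 0 < l) (hφ : ∀ t, |φ t| ≤ C) : |expAvg l φ| ≤ C := by
  unfold expAvg
  simpa only [integral_abs_expDensity hl, mul_one] using
    abs_integral_mul_le_of_abs_le (integrableOn_expDensity hl) hφ

theorem abs_expAvg_sub_expAvg_le (hl : 0 < l)
    (hφ : AEStronglyMeasurable φ (volume.restrict (Ici 0)))
    (hψ : AEStronglyMeasurable ψ (volume.restrict (Ici 0))) (hφC : ∀ t, |φ t| ≤ C)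
    (hψC : ∀ t, |ψ t| ≤ C) (hε : ∀ t, |φ t - ψ t| ≤ ε) : |expAvg l φ - expAvg l ψ| ≤ ε := by
  unfold expAvg
  simpa only [integral_abs_expDensity hl, mul_one] using
    abs_integral_mul_sub_integral_mul_le (integrableOn_expDensity hl) hφ hψ hφC hψC hε

theorem abs_expAvg_sub_expAvg_rate_le (ha : 0 < a) (hb : 0 < b)
    (hφ : AEStronglyMeasurable φ (volume.restrict (Ici 0))) (hφC : ∀ t, |φ t| ≤ 1) :
    |expAvg a φ - expAvg b φ| ≤ 2 * |a - b| / min a b := by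
  have integrable {l : ℝ} (hl : 0 < l) : IntegrableOn (fun t => expDensity l t * φ t) (Ici 0) :=
    (integrableOn_expDensity hl).mul_bdd hφ (c := 1) (ae_of_all _ hφC)
  rw [expAvg, expAvg, ← integral_sub (integrable ha) (integrable hb)]
  simp_rw [← sub_mul]
  calc |∫ t in Ici 0, (expDensity a t - expDensity b t) * φ t|
      ≤ 1 * ∫ t in Ici 0, |expDensity a t - expDensity b t| :=
        abs_integral_mul_le_of_abs_le
          ((integrableOn_expDensity ha).sub (integrableOn_expDensity hb)) hφC
    _ ≤ 2 * |a - b| / min a b := by rw [one_mul]; exact integral_abs_expDensity_sub_le ha hb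

end ExponentialAverage

section MarkovOperator

variable {X Θ : Type*} [MeasurableSpace Θ] {ϑ : Measure Θ} {p : X → Θ → ℝ} {w : Θ → X → X}
  {S : ℝ → X → X} {g h : X → ℝ} {a b l C ε : ℝ}

variable (ϑ p w) in
noncomputable def jumpOp (g : X → ℝ) (y : X) : ℝ := ∫ θ, p y θ * g (w θ y) ∂ϑ

variable (ϑ p w S) in
noncomputable def markovOp (l : ℝ) (g : X → ℝ) (x : X) : ℝ :=
  expAvg l fun t => jumpOp ϑ p w g (S t x)

theorem markovOp_comp_max_zero :
    markovOp ϑ p w (fun t => S (max t 0)) = markovOp ϑ p w S := by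
  ext l g x
  refine setIntegral_congr_fun measurableSet_Ici fun t (ht : 0 ≤ t) => ?_
  simp only [max_eq_left ht]

theorem abs_jumpOp_le (hp0 : ∀ x θ, 0 ≤ p x θ) (hp1 : ∀ x, ∫ θ, p x θ ∂ϑ = 1)
    (hg : ∀ z, |g z| ≤ C) (y : X) : |jumpOp ϑ p w g y| ≤ C := by
  unfold jumpOp
  simpa only [integral_abs_eq_one_of_nonneg (hp0 y) (hp1 y), mul_one] using
    abs_integral_mul_le_of_abs_le (integrable_of_integral_eq_one (hp1 y)) fun θ => hg (w θ y)

theorem abs_markovOp_le (hl : 0 < l) (hp0 : ∀ x θ, 0 ≤ p x θ) (hp1 : ∀ x, ∫ θ, p x θ ∂ϑ = 1)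
    (hg : ∀ z, |g z| ≤ C) (x : X) : |markovOp ϑ p w S l g x| ≤ C :=
  abs_expAvg_le hl fun t => abs_jumpOp_le hp0 hp1 hg (S t x)

variable [MeasurableSpace X]

theorem abs_jumpOp_sub_jumpOp_le (hp0 : ∀ x θ, 0 ≤ p x θ) (hp1 : ∀ x, ∫ θ, p x θ ∂ϑ = 1)
    (hw : Measurable fun q : X × Θ => w q.2 q.1) (hg : Measurable g) (hh : Measurable h)
    (hgC : ∀ z, |g z| ≤ C) (hhC : ∀ z, |h z| ≤ C) (hε : ∀ z, |g z - h z| ≤ ε) (y : X) :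
    |jumpOp ϑ p w g y - jumpOp ϑ p w h y| ≤ ε := by
  have hwy : Measurable fun θ => w θ y := hw.comp measurable_prodMk_left
  have hgy : Measurable fun θ => g (w θ y) := hg.comp hwy
  have hhy : Measurable fun θ => h (w θ y) := hh.comp hwy
  unfold jumpOp
  simpa only [integral_abs_eq_one_of_nonneg (hp0 y) (hp1 y), mul_one] using
    abs_integral_mul_sub_integral_mul_le (integrable_of_integral_eq_one (hp1 y))
      hgy.aestronglyMeasurable hhy.aestronglyMeasurable
      (fun θ => hgC (w θ y)) (fun θ => hhC (w θ y)) fun θ => hε (w θ y)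

variable [SFinite ϑ]

theorem measurable_jumpOp (hp : Measurable fun q : X × Θ => p q.1 q.2)
    (hw : Measurable fun q : X × Θ => w q.2 q.1) (hg : Measurable g) :
    Measurable (jumpOp ϑ p w g) :=
  (hp.mul (hg.comp hw)).stronglyMeasurable.integral_prod_right.measurable

theorem measurable_markovOp (hp : Measurable fun q : X × Θ => p q.1 q.2)
    (hw : Measurable fun q : X × Θ => w q.2 q.1) (hS : Measurable fun q : ℝ × X => S q.1 q.2)
    (l : ℝ) (hg : Measurable g) : Measurable (markovOp ϑ p w S l g) := by
  have hρ : Measurable (expDensity l) := by unfold expDensity; fun_prop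
  exact ((hρ.comp measurable_snd).mul ((measurable_jumpOp hp hw hg).comp
    (hS.comp measurable_swap))).stronglyMeasurable.integral_prod_right.measurable

theorem abs_markovOp_sub_markovOp_le (hl : 0 < l)
    (hp0 : ∀ x θ, 0 ≤ p x θ) (hp1 : ∀ x, ∫ θ, p x θ ∂ϑ = 1)
    (hp : Measurable fun q : X × Θ => p q.1 q.2) (hw : Measurable fun q : X × Θ => w q.2 q.1)
    (hS : Measurable fun q : ℝ × X => S q.1 q.2) (hg : Measurable g) (hh : Measurable h)
    (hgC : ∀ z, |g z| ≤ C) (hhC : ∀ z, |h z| ≤ C) (hε : ∀ z, |g z - h z| ≤ ε) (x : X) :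
    |markovOp ϑ p w S l g x - markovOp ϑ p w S l h x| ≤ ε :=
  abs_expAvg_sub_expAvg_le hl
    ((measurable_jumpOp hp hw hg).comp (hS.comp measurable_prodMk_right)).aestronglyMeasurable
    ((measurable_jumpOp hp hw hh).comp (hS.comp measurable_prodMk_right)).aestronglyMeasurable
    (fun t => abs_jumpOp_le hp0 hp1 hgC (S t x)) (fun t => abs_jumpOp_le hp0 hp1 hhC (S t x))
    fun t => abs_jumpOp_sub_jumpOp_le hp0 hp1 hw hg hh hgC hhC hε (S t x)

theorem abs_markovOp_sub_markovOp_rate_le (ha : 0 < a) (hb : 0 < b)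
    (hp0 : ∀ x θ, 0 ≤ p x θ) (hp1 : ∀ x, ∫ θ, p x θ ∂ϑ = 1)
    (hp : Measurable fun q : X × Θ => p q.1 q.2) (hw : Measurable fun q : X × Θ => w q.2 q.1)
    (hS : Measurable fun q : ℝ × X => S q.1 q.2) (hg : Measurable g) (hg1 : ∀ z, |g z| ≤ 1)
    (x : X) : |markovOp ϑ p w S a g x - markovOp ϑ p w S b g x| ≤ 2 * |a - b| / min a b :=
  abs_expAvg_sub_expAvg_rate_le ha hb
    ((measurable_jumpOp hp hw hg).comp (hS.comp measurable_prodMk_right)).aestronglyMeasurable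
    fun t => abs_jumpOp_le hp0 hp1 hg1 (S t x)

theorem mapsTo_markovOp (hl : 0 < l) (hp0 : ∀ x θ, 0 ≤ p x θ)
    (hp1 : ∀ x, ∫ θ, p x θ ∂ϑ = 1) (hp : Measurable fun q : X × Θ => p q.1 q.2)
    (hw : Measurable fun q : X × Θ => w q.2 q.1) (hS : Measurable fun q : ℝ × X => S q.1 q.2) :
    MapsTo (markovOp ϑ p w S l) {g | Measurable g ∧ ∀ z, |g z| ≤ 1}
      {g | Measurable g ∧ ∀ z, |g z| ≤ 1} :=
  fun _ ⟨hg, hg1⟩ => ⟨measurable_markovOp hp hw hS l hg, abs_markovOp_le hl hp0 hp1 hg1⟩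

theorem abs_markovOp_iterate_sub_le {f : X → ℝ} (ha : 0 < a) (hb : 0 < b)
    (hp0 : ∀ x θ, 0 ≤ p x θ) (hp1 : ∀ x, ∫ θ, p x θ ∂ϑ = 1)
    (hp : Measurable fun q : X × Θ => p q.1 q.2) (hw : Measurable fun q : X × Θ => w q.2 q.1)
    (hS : Measurable fun q : ℝ × X => S q.1 q.2) (n : ℕ) (hf : Measurable f)
    (hf1 : ∀ z, |f z| ≤ 1) (x : X) :
    |(markovOp ϑ p w S a)^[n] f x - (markovOp ϑ p w S b)^[n] f x| ≤
      n * (2 * |a - b| / min a b) :=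
  abs_iterate_sub_iterate_le (mapsTo_markovOp ha hp0 hp1 hp hw hS)
    (mapsTo_markovOp hb hp0 hp1 hp hw hS)
    (fun _ ⟨hg, hg1⟩ _ ⟨hh, hh1⟩ _ hε =>
      abs_markovOp_sub_markovOp_le ha hp0 hp1 hp hw hS hg hh hg1 hh1 hε)
    (fun _ ⟨hg, hg1⟩ => abs_markovOp_sub_markovOp_rate_le ha hb hp0 hp1 hp hw hS hg hg1)
    n ⟨hf, hf1⟩ x

end MarkovOperator

theorem stmt_8_general
    {H : Type*} [NormedAddCommGroup H]
    [SecondCountableTopology H] [MeasurableSpace H] [BorelSpace H]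
    {Θ : Type*} [TopologicalSpace Θ] [MeasurableSpace Θ] [BorelSpace Θ]
    (ϑ : Measure Θ) [SigmaFinite ϑ]
    (X : Set H)
    (S : ℝ → X → X)
    (hScont : ContinuousOn (fun q : ℝ × X => S q.1 q.2) (Set.Ici 0 ×ˢ Set.univ))
    (w : Θ → X → X) (hw : Continuous fun q : X × Θ => w q.2 q.1)
    (p : X → Θ → ℝ) (hpcont : Continuous fun q : X × Θ => p q.1 q.2)
    (hp0 : ∀ x θ, 0 ≤ p x θ) (hp1 : ∀ x, ∫ θ, p x θ ∂ϑ = 1)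
    (α : ℝ)
    (n : ℕ) (μ : MeasureTheory.SignedMeasure X) (lbar : ℝ) (hlbar : max 0 α < lbar) :
    Tendsto (fun lam : ℝ =>
        sSup {r : ℝ | ∃ f : X → ℝ, (∀ z, |f z| ≤ 1) ∧ LipschitzWith 1 f ∧
          r = |sInt μ ((fun g : X → ℝ => fun x =>
                  ∫ t in Set.Ici (0 : ℝ), lam * Real.exp (-(lam * t)) *
                    ∫ θ, p (S t x) θ * g (w θ (S t x)) ∂ϑ)^[n] f) -
               sInt μ ((fun g : X → ℝ => fun x =>
                  ∫ t in Set.Ici (0 : ℝ), lbar * Real.exp (-(lbar * t)) *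
                    ∫ θ, p (S t x) θ * g (w θ (S t x)) ∂ϑ)^[n] f)|})
      (nhdsWithin lbar (Set.Ioi (max 0 α))) (nhds 0) := by
  have hlbar0 : 0 < lbar := (le_max_left 0 α).trans_lt hlbar
  -- `S` is only continuous for `t ≥ 0`, which are the only times `P_λ` sees.
  set S' : ℝ → X → X := fun t => S (max t 0)
  have hS' : Measurable fun q : ℝ × X => S' q.1 q.2 :=
    (hScont.comp_continuous (f := fun q : ℝ × X => (max q.1 0, q.2)) (by fun_prop)
      fun q => ⟨le_max_right q.1 0, mem_univ _⟩).measurable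
  have hpm := hpcont.measurable
  have hwm := hw.measurable
  change Tendsto (fun lam => sSup {r | ∃ f : X → ℝ, (∀ z, |f z| ≤ 1) ∧ LipschitzWith 1 f ∧
      r = |sInt μ ((markovOp ϑ p w S lam)^[n] f) - sInt μ ((markovOp ϑ p w S lbar)^[n] f)|}) _ _
  rw [← markovOp_comp_max_zero]
  set B : ℝ → ℝ := fun l => n * (2 * |l - lbar| / min l lbar) * μ.totalVariation.real univ
  refine squeeze_zero' (.of_forall fun _ => Real.sSup_nonneg fun r ⟨_, _, _, hr⟩ =>
    hr ▸ abs_nonneg _) (?_ : ∀ᶠ l in _, _ ≤ B l) ?_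
  · filter_upwards [self_mem_nhdsWithin] with l (hl : max 0 α < l)
    have hl0 : 0 < l := (le_max_left 0 α).trans_lt hl
    refine Real.sSup_le (fun r ⟨f, hf1, hf, hr⟩ => hr ▸ ?_) (by positivity)
    have hfs : f ∈ {g : X → ℝ | Measurable g ∧ ∀ z, |g z| ≤ 1} := ⟨hf.continuous.measurable, hf1⟩
    obtain ⟨hPm, hP1⟩ := (mapsTo_markovOp hl0 hp0 hp1 hpm hwm hS').iterate n hfs
    obtain ⟨hQm, hQ1⟩ := (mapsTo_markovOp hlbar0 hp0 hp1 hpm hwm hS').iterate n hfs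
    exact abs_sInt_sub_sInt_le μ hPm hQm hP1 hQ1
      (abs_markovOp_iterate_sub_le hl0 hlbar0 hp0 hp1 hpm hwm hS' n hfs.1 hf1)
  · have hB : ContinuousAt B lbar := by fun_prop (disch := simp [hlbar0.ne'])
    simpa [B] using hB.tendsto.mono_left nhdsWithin_le_nhds

/-- For every `n ∈ ℕ`, every finite signed Borel measure `μ` on `X` and
every `λ̄ ∈ (ᾱ, ∞)`, the map `λ ↦ μP_λ^n` is continuous at `λ̄` in the FM norm:
`‖μP_λ^n − μP_{λ̄}^n‖_FM → 0` as `λ → λ̄` within `(ᾱ, ∞)`.  Here `μP_λ^n` is paired with a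
test function `f` through the duality `⟨f, μP_λ^n⟩ = ⟨P_λ^n f, μ⟩`, where `P_λ f(x) =
∫₀^∞ λ e^{−λt} ∫_Θ p(S(t,x),θ) f(w_θ(S(t,x))) dθ dt` and `P_λ^n` is its `n`-fold iterate. -/
theorem stmt_8
    {H : Type*} [NormedAddCommGroup H] [NormedSpace ℝ H] [CompleteSpace H]
    [SecondCountableTopology H] [MeasurableSpace H] [BorelSpace H]
    {Θ : Type*} [TopologicalSpace Θ] [MeasurableSpace Θ] [BorelSpace Θ]
    (ϑ : Measure Θ) [SigmaFinite ϑ]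
    (X : Set H) (hXc : IsClosed X) (hXne : X.Nonempty)
    (S : ℝ → X → X)
    (hS0 : ∀ x, S 0 x = x)
    (hSadd : ∀ s t : ℝ, 0 ≤ s → 0 ≤ t → ∀ x, S (s + t) x = S s (S t x))
    (hScont : ContinuousOn (fun q : ℝ × X => S q.1 q.2) (Set.Ici 0 ×ˢ Set.univ))
    (w : Θ → X → X) (hw : Continuous fun q : X × Θ => w q.2 q.1)
    (p : X → Θ → ℝ) (hpcont : Continuous fun q : X × Θ => p q.1 q.2)
    (hp0 : ∀ x θ, 0 ≤ p x θ) (hp1 : ∀ x, ∫ θ, p x θ ∂ϑ = 1)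
    (L Lw Lp : ℝ) (α : ℝ) (hL : 0 < L) (hLw : 0 < Lw) (hLp : 0 < Lp)
    (hA2 : ∀ t : ℝ, 0 ≤ t → ∀ x y : X,
      ‖(S t x : H) - S t y‖ ≤ L * Real.exp (α * t) * ‖(x : H) - y‖)
    (hA3 : ∀ x y : X, ∫ θ, p x θ * ‖(w θ x : H) - w θ y‖ ∂ϑ ≤ Lw * ‖(x : H) - y‖)
    (hA4 : ∀ x y : X, ∫ θ, |p x θ - p y θ| ∂ϑ ≤ Lp * ‖(x : H) - y‖)
    (n : ℕ) (μ : MeasureTheory.SignedMeasure X) (lbar : ℝ) (hlbar : max 0 α < lbar) :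
    Tendsto (fun lam : ℝ =>
        sSup {r : ℝ | ∃ f : X → ℝ, (∀ z, |f z| ≤ 1) ∧ LipschitzWith 1 f ∧
          r = |sInt μ ((fun g : X → ℝ => fun x =>
                  ∫ t in Set.Ici (0 : ℝ), lam * Real.exp (-(lam * t)) *
                    ∫ θ, p (S t x) θ * g (w θ (S t x)) ∂ϑ)^[n] f) -
               sInt μ ((fun g : X → ℝ => fun x =>
                  ∫ t in Set.Ici (0 : ℝ), lbar * Real.exp (-(lbar * t)) *
                    ∫ θ, p (S t x) θ * g (w θ (S t x)) ∂ϑ)^[n] f)|})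
      (nhdsWithin lbar (Set.Ioi (max 0 α))) (nhds 0) :=
  stmt_8_general ϑ X S hScont w hw p hpcont hp0 hp1 α n μ lbar hlbar
end

section
/- For every t ≥ 0 and every bounded continuous function f : X → ℝ, the function Π_(t)f : X → ℝ, x ↦ ∫_Θ p(S(t,x),θ) f(w_θ(S(t,x))) dθ, is bounded and continuous (i.e., the Markov operator associated with the kernel Π_(t) has the Feller property). -/
open MeasureTheory Real Filter Topology

/-!
Bound and continuity both come from writing `Π_(t)f` as `Φ ∘ S t` with
`Φ x = ∫ p(x,θ) f(w_θ x) dθ`. Since `p(x,·)` is a probability density, `|Φ| ≤ sup |f|`.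
For continuity at `y`, split `Φ x = ∫ (p(x,θ) - p(y,θ)) f(w_θ x) dθ + ∫ p(y,θ) f(w_θ x) dθ`:
the first term is at most `sup |f| · L_p ‖x - y‖` by (A4), and the second is continuous in `x`
by dominated convergence with the integrable majorant `sup |f| · p(y,·)`.
-/

section IntegralMul

variable {Θ : Type*} [MeasurableSpace Θ] {ϑ : Measure Θ}

theorem abs_integral_mul_le_of_integral_eq_one {p g : Θ → ℝ} {C : ℝ}
    (hp0 : ∀ θ, 0 ≤ p θ) (hp1 : ∫ θ, p θ ∂ϑ = 1) (hg : ∀ θ, |g θ| ≤ C) :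
    |∫ θ, p θ * g θ ∂ϑ| ≤ C := by
  have hp : Integrable p ϑ := .of_integral_ne_zero (by simp [hp1])
  calc |∫ θ, p θ * g θ ∂ϑ| ≤ ∫ θ, C * p θ ∂ϑ :=
        norm_integral_le_of_norm_le (f := fun θ => p θ * g θ) (hp.const_mul C) <|
          ae_of_all _ fun θ => by
          rw [Real.norm_eq_abs, abs_mul, abs_of_nonneg (hp0 θ), mul_comm C]
          exact mul_le_mul_of_nonneg_left (hg θ) (hp0 θ)
    _ = C := by rw [integral_const_mul, hp1, mul_one]

theorem abs_integral_mul_sub_integral_mul_le_s11 {p q g : Θ → ℝ} {C : ℝ}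
    (hp : Integrable p ϑ) (hq : Integrable q ϑ) (hg_meas : AEStronglyMeasurable g ϑ)
    (hg : ∀ θ, |g θ| ≤ C) :
    |∫ θ, p θ * g θ ∂ϑ - ∫ θ, q θ * g θ ∂ϑ| ≤ C * ∫ θ, |p θ - q θ| ∂ϑ := by
  have hg' : ∀ᵐ θ ∂ϑ, ‖g θ‖ ≤ C := ae_of_all _ hg
  have hpg : Integrable (fun θ => p θ * g θ) ϑ := hp.mul_bdd hg_meas hg'
  have hqg : Integrable (fun θ => q θ * g θ) ϑ := hq.mul_bdd hg_meas hg'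
  rw [← integral_sub hpg hqg, ← integral_const_mul (μ := ϑ) C fun θ => |p θ - q θ|]
  refine norm_integral_le_of_norm_le (f := fun θ => p θ * g θ - q θ * g θ)
    ((hp.sub hq).abs.const_mul C) <| ae_of_all _ fun θ => ?_
  rw [← sub_mul, Real.norm_eq_abs, abs_mul, mul_comm]
  exact mul_le_mul_of_nonneg_right (hg θ) (abs_nonneg _)

theorem tendsto_integral_abs_sub_of_le_dist {X : Type*} [PseudoMetricSpace X]
    {p : X → Θ → ℝ} {L : ℝ} (h : ∀ x y, ∫ θ, |p x θ - p y θ| ∂ϑ ≤ L * dist x y) (y : X) :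
    Tendsto (fun x => ∫ θ, |p x θ - p y θ| ∂ϑ) (𝓝 y) (𝓝 0) := by
  have hdist : Tendsto (fun x => L * dist x y) (𝓝 y) (𝓝 0) := by
    simpa using ((tendsto_id (x := 𝓝 y)).dist (tendsto_const_nhds (x := y))).const_mul L
  exact squeeze_zero (fun x => integral_nonneg fun θ => abs_nonneg _) (fun x => h x y) hdist

theorem continuous_integral_mul_of_tendsto_integral_abs_sub {X : Type*} [TopologicalSpace X]
    [FirstCountableTopology X] {p g : X → Θ → ℝ} {C : ℝ}
    (hp : ∀ x, Integrable (p x) ϑ)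
    (hp_cont : ∀ y, Tendsto (fun x => ∫ θ, |p x θ - p y θ| ∂ϑ) (𝓝 y) (𝓝 0))
    (hg_meas : ∀ x, AEStronglyMeasurable (g x) ϑ) (hg_cont : ∀ θ, Continuous fun x => g x θ)
    (hg : ∀ x θ, |g x θ| ≤ C) :
    Continuous fun x => ∫ θ, p x θ * g x θ ∂ϑ := by
  refine continuous_iff_continuousAt.2 fun y => ?_
  have hfixed : ContinuousAt (fun x => ∫ θ, p y θ * g x θ ∂ϑ) y := by
    refine (continuous_of_dominated (F := fun x θ => p y θ * g x θ)
      (bound := fun θ => C * |p y θ|)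
      (fun x => (hp y).aestronglyMeasurable.mul (hg_meas x)) (fun x => ae_of_all _ fun θ => ?_)
      ((hp y).abs.const_mul C) (ae_of_all _ fun θ => continuous_const.mul (hg_cont θ))).continuousAt
    rw [Real.norm_eq_abs, abs_mul, mul_comm]
    exact mul_le_mul_of_nonneg_right (hg x θ) (abs_nonneg _)
  have hdiff : Tendsto (fun x => ∫ θ, p x θ * g x θ ∂ϑ - ∫ θ, p y θ * g x θ ∂ϑ) (𝓝 y) (𝓝 0) :=
    squeeze_zero_norm
      (fun x => abs_integral_mul_sub_integral_mul_le_s11 (hp x) (hp y) (hg_meas x) (hg x))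
      (by simpa using (hp_cont y).const_mul C)
  unfold ContinuousAt
  simpa only [sub_add_cancel, zero_add] using hdiff.add hfixed

end IntegralMul

theorem stmt_11_general
    {H : Type*} [NormedAddCommGroup H]
    {Θ : Type*} [TopologicalSpace Θ] [MeasurableSpace Θ] [BorelSpace Θ]
    (ϑ : Measure Θ)
    (X : Set H)
    (S : ℝ → X → X)
    (hScont : ContinuousOn (fun q : ℝ × X => S q.1 q.2) (Set.Ici 0 ×ˢ Set.univ))
    (w : Θ → X → X) (hw : Continuous fun q : X × Θ => w q.2 q.1)
    (p : X → Θ → ℝ)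
    (hp0 : ∀ x θ, 0 ≤ p x θ) (hp1 : ∀ x, ∫ θ, p x θ ∂ϑ = 1)
    (Lp : ℝ)
    (hA4 : ∀ x y : X, ∫ θ, |p x θ - p y θ| ∂ϑ ≤ Lp * ‖(x : H) - y‖)
    (t : ℝ) (ht : 0 ≤ t)
    (f : X → ℝ) (hfc : Continuous f) (hfb : ∃ C : ℝ, ∀ z, |f z| ≤ C) :
    (∃ C : ℝ, ∀ x : X, |∫ θ, p (S t x) θ * f (w θ (S t x)) ∂ϑ| ≤ C) ∧
    Continuous (fun x : X => ∫ θ, p (S t x) θ * f (w θ (S t x)) ∂ϑ) := by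
  obtain ⟨C, hC⟩ := hfb
  have hSt : Continuous (S t) :=
    hScont.comp_continuous (continuous_const.prodMk continuous_id) fun _ => ⟨ht, trivial⟩
  refine ⟨⟨C, fun x => abs_integral_mul_le_of_integral_eq_one (hp0 _) (hp1 _) fun _ => hC _⟩, ?_⟩
  have hp_lip : ∀ x y : X, ∫ θ, |p x θ - p y θ| ∂ϑ ≤ Lp * dist x y := fun x y => by
    simpa only [Subtype.dist_eq, dist_eq_norm] using hA4 x y
  refine Continuous.comp (g := fun x => ∫ θ, p x θ * f (w θ x) ∂ϑ) ?_ hSt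
  exact continuous_integral_mul_of_tendsto_integral_abs_sub
    (fun x => .of_integral_ne_zero (by simp [hp1]))
    (tendsto_integral_abs_sub_of_le_dist hp_lip)
    (fun x => (hfc.comp (hw.comp (continuous_const.prodMk continuous_id))).aestronglyMeasurable)
    (fun θ => hfc.comp (hw.comp (continuous_id.prodMk continuous_const)))
    (fun _ _ => hC _)

/-- For every `t ≥ 0` and every bounded continuous `f : X → ℝ`,
the function `Π_(t)f : x ↦ ∫_Θ p(S(t,x),θ) f(w_θ(S(t,x))) dθ` is bounded and continuous
(the Markov operator associated with the kernel `Π_(t)` has the Feller property). -/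
theorem stmt_11
    {H : Type*} [NormedAddCommGroup H] [NormedSpace ℝ H] [CompleteSpace H]
    [SecondCountableTopology H] [MeasurableSpace H] [BorelSpace H]
    {Θ : Type*} [TopologicalSpace Θ] [MeasurableSpace Θ] [BorelSpace Θ]
    (ϑ : Measure Θ) [SigmaFinite ϑ]
    (X : Set H) (hXc : IsClosed X) (hXne : X.Nonempty)
    (S : ℝ → X → X)
    (hS0 : ∀ x, S 0 x = x)
    (hSadd : ∀ s t : ℝ, 0 ≤ s → 0 ≤ t → ∀ x, S (s + t) x = S s (S t x))
    (hScont : ContinuousOn (fun q : ℝ × X => S q.1 q.2) (Set.Ici 0 ×ˢ Set.univ))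
    (w : Θ → X → X) (hw : Continuous fun q : X × Θ => w q.2 q.1)
    (p : X → Θ → ℝ) (hpcont : Continuous fun q : X × Θ => p q.1 q.2)
    (hp0 : ∀ x θ, 0 ≤ p x θ) (hp1 : ∀ x, ∫ θ, p x θ ∂ϑ = 1)
    (Lp : ℝ) (hLp : 0 < Lp)
    (hA4 : ∀ x y : X, ∫ θ, |p x θ - p y θ| ∂ϑ ≤ Lp * ‖(x : H) - y‖)
    (t : ℝ) (ht : 0 ≤ t)
    (f : X → ℝ) (hfc : Continuous f) (hfb : ∃ C : ℝ, ∀ z, |f z| ≤ C) :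
    (∃ C : ℝ, ∀ x : X, |∫ θ, p (S t x) θ * f (w θ (S t x)) ∂ϑ| ≤ C) ∧
    Continuous (fun x : X => ∫ θ, p (S t x) θ * f (w θ (S t x)) ∂ϑ) :=
  stmt_11_general ϑ X S hScont w hw p hp0 hp1 Lp hA4 t ht f hfc hfb
end

section
/- Under (A2), for all λ₁, λ₂ > ᾱ and all Borel probability measures μ₁, μ₂ on X: ‖μ₁G_{λ₁} − μ₂G_{λ₂}‖_FM ≤ |λ₁ − λ₂| (1/λ₁ + 1/λ₂) + (1 + L λ₂/(λ₂ − α)) ‖μ₁ − μ₂‖_FM, where μG_λ(A) := ∫_X ∫₀^∞ λ e^{−λ t} 𝟙_A(S(t,x)) dt μ(dx). -/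
/-!
With `G_λ f x = ∫₀^∞ λ e^{-λt} f (S(t,x)) dt` we have `⟨f, μG_λ⟩ = ∫ G_λ f dμ`, and
`⟨f, μ₁G_{λ₁}⟩ - ⟨f, μ₂G_{λ₂}⟩
  = ∫ (G_{λ₁} f - G_{λ₂} f) dμ₁ + (∫ G_{λ₂} f dμ₁ - ∫ G_{λ₂} f dμ₂)`.
The first term is bounded pointwise by the `L¹` distance of the exponential densities, which is at
most `|λ₁ - λ₂| (1/λ₁ + 1/λ₂)`. For the second, `G_{λ₂} f` is bounded by `1` and, by (A2),
`Lλ₂/(λ₂ - α)`-Lipschitz, so after dividing by `1 + Lλ₂/(λ₂ - α)` it is a Fortet–Mourier test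
function.
-/

open MeasureTheory Real Set NNReal

lemma integrableOn_exp_neg_mul_Ici {b : ℝ} (hb : 0 < b) :
    IntegrableOn (fun t : ℝ => exp (-(b * t))) (Ici 0) := by
  rw [integrableOn_Ici_iff_integrableOn_Ioi]
  simpa only [neg_mul] using exp_neg_integrableOn_Ioi 0 hb

lemma integral_exp_neg_mul_Ici {b : ℝ} (hb : 0 < b) :
    ∫ t in Ici (0 : ℝ), exp (-(b * t)) = 1 / b := by
  simp_rw [integral_Ici_eq_integral_Ioi, ← neg_mul, integral_exp_mul_Ioi (neg_neg_of_pos hb)]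
  field_simp
  simp

lemma integral_abs_sub_exp_density_le_of_le {a b : ℝ} (ha : 0 < a) (hab : a ≤ b) :
    ∫ t in Ici (0 : ℝ), |a * exp (-(a * t)) - b * exp (-(b * t))|
      ≤ (b - a) * (1 / a + 1 / b) := by
  have hb : 0 < b := ha.trans_le hab
  have hia := integrableOn_exp_neg_mul_Ici ha
  have hib := integrableOn_exp_neg_mul_Ici hb
  -- the difference is `(a - b) e^{-bt} + a (e^{-at} - e^{-bt})`, a sum of two terms of fixed sign
  have hpt : ∀ t ∈ Ici (0 : ℝ), |a * exp (-(a * t)) - b * exp (-(b * t))|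
      ≤ a * exp (-(a * t)) + (b - 2 * a) * exp (-(b * t)) := by
    intro t (ht : 0 ≤ t)
    have hexp : exp (-(b * t)) ≤ exp (-(a * t)) := exp_le_exp.2 (by nlinarith)
    have h1 := mul_nonneg ha.le (sub_nonneg.2 hexp)
    have h2 := mul_nonneg (sub_nonneg.2 hab) (exp_pos (-(b * t))).le
    rw [abs_le]
    constructor <;> linarith
  calc ∫ t in Ici (0 : ℝ), |a * exp (-(a * t)) - b * exp (-(b * t))|
      ≤ ∫ t in Ici (0 : ℝ), (a * exp (-(a * t)) + (b - 2 * a) * exp (-(b * t))) :=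
        setIntegral_mono_on ((hia.const_mul a).sub (hib.const_mul b)).abs
          ((hia.const_mul _).add (hib.const_mul _)) measurableSet_Ici hpt
    _ = 2 * (b - a) / b := by
        rw [integral_add (hia.const_mul _) (hib.const_mul _), integral_const_mul,
          integral_const_mul, integral_exp_neg_mul_Ici ha, integral_exp_neg_mul_Ici hb]
        field_simp
        ring
    _ ≤ (b - a) * (1 / a + 1 / b) := by
        have : 1 / b ≤ 1 / a := one_div_le_one_div_of_le ha hab
        rw [mul_div_assoc, ← mul_one_div]
        nlinarith [sub_nonneg.2 hab]

lemma integral_abs_sub_exp_density_le {a b : ℝ} (ha : 0 < a) (hb : 0 < b) :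
    ∫ t in Ici (0 : ℝ), |a * exp (-(a * t)) - b * exp (-(b * t))|
      ≤ |a - b| * (1 / a + 1 / b) := by
  wlog hab : a ≤ b generalizing a b
  · simpa only [abs_sub_comm, add_comm] using this hb ha (le_of_not_ge hab)
  rw [abs_sub_comm, abs_of_nonneg (sub_nonneg.2 hab)]
  exact integral_abs_sub_exp_density_le_of_le ha hab

section Resolvent

variable {X : Type*} (S : ℝ → X → X)

/-- The paper's `G_l f`, dual to `μ ↦ μG_l`: `⟨f, μG_l⟩ = ∫ resolventAverage S l f ∂μ`. -/
noncomputable def resolventAverage (l : ℝ) (f : X → ℝ) (x : X) : ℝ :=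
  ∫ t in Ici (0 : ℝ), l * exp (-(l * t)) * f (S t x)

variable {S} {f : X → ℝ} {M : ℝ}

lemma integrableOn_resolvent_integrand [TopologicalSpace X] {l : ℝ} (hl : 0 < l) {x : X}
    (hS : ContinuousOn (S · x) (Ici 0)) (hf : Continuous f) (hf_bdd : ∀ z, |f z| ≤ M) :
    IntegrableOn (fun t => l * exp (-(l * t)) * f (S t x)) (Ici 0) :=
  ((integrableOn_exp_neg_mul_Ici hl).const_mul l).mul_bdd
    ((hf.comp_continuousOn hS).aestronglyMeasurable measurableSet_Ici)
    (ae_of_all _ fun t => hf_bdd (S t x))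

lemma abs_resolventAverage_le {l : ℝ} (hl : 0 < l) (x : X) (hf_bdd : ∀ z, |f z| ≤ M) :
    |resolventAverage S l f x| ≤ M := by
  have hi := ((integrableOn_exp_neg_mul_Ici hl).const_mul l).mul_const M
  calc |resolventAverage S l f x|
      ≤ ∫ t in Ici (0 : ℝ), l * exp (-(l * t)) * M := by
        rw [← norm_eq_abs]
        refine norm_integral_le_of_norm_le hi (ae_of_all _ fun t => ?_)
        rw [norm_mul, norm_mul, norm_of_nonneg hl.le, norm_of_nonneg (exp_pos _).le, norm_eq_abs]
        exact mul_le_mul_of_nonneg_left (hf_bdd _) (by positivity)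
    _ = M := by rw [integral_mul_const, integral_const_mul, integral_exp_neg_mul_Ici hl]; field_simp

lemma abs_resolventAverage_sub_resolventAverage_le [TopologicalSpace X] {a b : ℝ}
    (ha : 0 < a) (hb : 0 < b) {x : X} (hS : ContinuousOn (S · x) (Ici 0))
    (hf : Continuous f) (hf_bdd : ∀ z, |f z| ≤ M) :
    |resolventAverage S a f x - resolventAverage S b f x| ≤ M * (|a - b| * (1 / a + 1 / b)) := by
  have hdens := ((integrableOn_exp_neg_mul_Ici ha).const_mul a).sub
    ((integrableOn_exp_neg_mul_Ici hb).const_mul b)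
  calc |resolventAverage S a f x - resolventAverage S b f x|
      = |∫ t in Ici (0 : ℝ), (a * exp (-(a * t)) - b * exp (-(b * t))) * f (S t x)| := by
        rw [resolventAverage, resolventAverage, ← integral_sub
          (integrableOn_resolvent_integrand ha hS hf hf_bdd)
          (integrableOn_resolvent_integrand hb hS hf hf_bdd)]
        simp only [sub_mul]
    _ ≤ ∫ t in Ici (0 : ℝ), M * |a * exp (-(a * t)) - b * exp (-(b * t))| := by
        rw [← norm_eq_abs]
        refine norm_integral_le_of_norm_le (hdens.abs.const_mul M) (ae_of_all _ fun t => ?_)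
        rw [norm_mul, norm_eq_abs, norm_eq_abs, mul_comm]
        exact mul_le_mul_of_nonneg_right (hf_bdd _) (abs_nonneg _)
    _ ≤ M * (|a - b| * (1 / a + 1 / b)) := by
        rw [integral_const_mul]
        exact mul_le_mul_of_nonneg_left (integral_abs_sub_exp_density_le ha hb)
          ((abs_nonneg _).trans (hf_bdd (S 0 x)))

lemma dist_resolventAverage_le [PseudoMetricSpace X] {K : ℝ≥0} {L α l : ℝ}
    (hl : 0 < l) (hlα : α < l) (hS : ∀ x, ContinuousOn (S · x) (Ici 0))
    (hS_lip : ∀ t, 0 ≤ t → ∀ x y, dist (S t x) (S t y) ≤ L * exp (α * t) * dist x y)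
    (hf : LipschitzWith K f) (hf_bdd : ∀ z, |f z| ≤ M) (x y : X) :
    dist (resolventAverage S l f x) (resolventAverage S l f y)
      ≤ K * (L * l / (l - α)) * dist x y := by
  have hi := (integrableOn_exp_neg_mul_Ici (sub_pos.2 hlα)).const_mul (K * L * l * dist x y)
  calc dist (resolventAverage S l f x) (resolventAverage S l f y)
      = ‖∫ t in Ici (0 : ℝ), l * exp (-(l * t)) * (f (S t x) - f (S t y))‖ := by
        rw [dist_eq_norm, resolventAverage, resolventAverage, ← integral_sub
          (integrableOn_resolvent_integrand hl (hS x) hf.continuous hf_bdd)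
          (integrableOn_resolvent_integrand hl (hS y) hf.continuous hf_bdd)]
        simp only [mul_sub]
    _ ≤ ∫ t in Ici (0 : ℝ), K * L * l * dist x y * exp (-((l - α) * t)) := by
        refine norm_integral_le_of_norm_le hi (ae_restrict_of_forall_mem measurableSet_Ici
          fun t (ht : 0 ≤ t) => ?_)
        have hft : ‖f (S t x) - f (S t y)‖ ≤ K * (L * exp (α * t) * dist x y) :=
          (hf.dist_le_mul _ _).trans (mul_le_mul_of_nonneg_left (hS_lip t ht x y) K.2)
        calc ‖l * exp (-(l * t)) * (f (S t x) - f (S t y))‖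
            = l * exp (-(l * t)) * ‖f (S t x) - f (S t y)‖ := by
              rw [norm_mul, norm_mul, norm_of_nonneg hl.le, norm_of_nonneg (exp_pos _).le]
          _ ≤ l * exp (-(l * t)) * (K * (L * exp (α * t) * dist x y)) :=
              mul_le_mul_of_nonneg_left hft (by positivity)
          _ = K * L * l * dist x y * exp (-((l - α) * t)) := by
              rw [show -((l - α) * t) = -(l * t) + α * t by ring, exp_add]
              ring
    _ = K * (L * l / (l - α)) * dist x y := by
        rw [integral_const_mul, integral_exp_neg_mul_Ici (sub_pos.2 hlα)]
        ring

lemma integrable_resolventAverage [PseudoMetricSpace X] [MeasurableSpace X]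
    [OpensMeasurableSpace X] {μ : Measure X} [IsFiniteMeasure μ] {K : ℝ≥0} {L α l : ℝ}
    (hl : 0 < l) (hlα : α < l) (hS : ∀ x, ContinuousOn (S · x) (Ici 0))
    (hS_lip : ∀ t, 0 ≤ t → ∀ x y, dist (S t x) (S t y) ≤ L * exp (α * t) * dist x y)
    (hf : LipschitzWith K f) (hf_bdd : ∀ z, |f z| ≤ M) :
    Integrable (resolventAverage S l f) μ :=
  have hG := LipschitzWith.of_dist_le' (dist_resolventAverage_le hl hlα hS hS_lip hf hf_bdd)
  .of_bound hG.continuous.aestronglyMeasurable M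
    (ae_of_all _ fun x => (norm_eq_abs _).trans_le (abs_resolventAverage_le hl x hf_bdd))

end Resolvent

lemma abs_integral_sub_integral_le_of_abs_sub_le {X : Type*} [MeasurableSpace X] {μ : Measure X}
    [IsProbabilityMeasure μ] {g h : X → ℝ} {B : ℝ} (hg : Integrable g μ) (hh : Integrable h μ)
    (hB : ∀ x, |g x - h x| ≤ B) :
    |(∫ x, g x ∂μ) - ∫ x, h x ∂μ| ≤ B := by
  rw [← integral_sub hg hh]
  simpa only [norm_eq_abs, probReal_univ, mul_one] using
    norm_integral_le_of_norm_le_const (μ := μ)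
      (ae_of_all _ fun x => (norm_eq_abs (g x - h x)).trans_le (hB x))

section FortetMourier

variable {X : Type*} [MeasurableSpace X] [PseudoMetricSpace X]

def fortetMourierSet (μ ν : Measure X) : Set ℝ :=
  {r : ℝ | ∃ f : X → ℝ, (∀ z, |f z| ≤ 1) ∧ LipschitzWith 1 f ∧
    r = |(∫ x, f x ∂μ) - ∫ x, f x ∂ν|}

noncomputable def fortetMourierDist (μ ν : Measure X) : ℝ :=
  sSup (fortetMourierSet μ ν)

variable {μ ν : Measure X}

lemma bddAbove_fortetMourierSet [IsFiniteMeasure μ] [IsFiniteMeasure ν] :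
    BddAbove (fortetMourierSet μ ν) := by
  refine ⟨μ.real univ + ν.real univ, ?_⟩
  rintro _ ⟨f, hf_bdd, -, rfl⟩
  have hbound {ρ : Measure X} [IsFiniteMeasure ρ] : |∫ x, f x ∂ρ| ≤ ρ.real univ := by
    simpa only [norm_eq_abs, one_mul] using norm_integral_le_of_norm_le_const (μ := ρ)
      (ae_of_all _ fun z => (norm_eq_abs (f z)).trans_le (hf_bdd z))
  exact (abs_sub _ _).trans (add_le_add hbound hbound)

lemma fortetMourierDist_nonneg : 0 ≤ fortetMourierDist μ ν :=
  Real.sSup_nonneg fun _ ⟨_, _, _, hr⟩ => hr ▸ abs_nonneg _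

lemma abs_integral_sub_integral_le_mul_fortetMourierDist [IsFiniteMeasure μ] [IsFiniteMeasure ν]
    {g : X → ℝ} {c : ℝ} (hc : 0 < c) (hg_bdd : ∀ z, |g z| ≤ c)
    (hg_lip : ∀ x y, dist (g x) (g y) ≤ c * dist x y) :
    |(∫ x, g x ∂μ) - ∫ x, g x ∂ν| ≤ c * fortetMourierDist μ ν := by
  have h_test : |(∫ x, g x / c ∂μ) - ∫ x, g x / c ∂ν| ∈ fortetMourierSet μ ν := by
    refine ⟨(g · / c), fun z => ?_, LipschitzWith.of_dist_le_mul fun x y => ?_, rfl⟩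
    · rw [abs_div, abs_of_pos hc, div_le_one hc]
      exact hg_bdd z
    · rw [Real.dist_eq, div_sub_div_same, abs_div, abs_of_pos hc, div_le_iff₀ hc,
        ← Real.dist_eq, NNReal.coe_one, one_mul, mul_comm]
      exact hg_lip x y
  have h_scale :
      (∫ x, g x ∂μ) - ∫ x, g x ∂ν = c * ((∫ x, g x / c ∂μ) - ∫ x, g x / c ∂ν) := by
    rw [integral_div, integral_div]
    field_simp
  rw [h_scale, abs_mul, abs_of_pos hc]
  exact mul_le_mul_of_nonneg_left (le_csSup bddAbove_fortetMourierSet h_test) hc.le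

end FortetMourier

theorem stmt_15_general
    {H : Type*} [NormedAddCommGroup H] [MeasurableSpace H] [BorelSpace H]
    (X : Set H) (S : ℝ → X → X)
    (hScont : ContinuousOn (fun q : ℝ × X => S q.1 q.2) (Set.Ici 0 ×ˢ Set.univ))
    (L α : ℝ) (hL : 0 < L)
    (hA2 : ∀ t : ℝ, 0 ≤ t → ∀ x y : X,
      ‖(S t x : H) - S t y‖ ≤ L * Real.exp (α * t) * ‖(x : H) - y‖)
    (l1 l2 : ℝ) (hl1 : max 0 α < l1) (hl2 : max 0 α < l2)
    (μ1 μ2 : Measure X) [IsProbabilityMeasure μ1] [IsProbabilityMeasure μ2] :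
    sSup {r : ℝ | ∃ f : X → ℝ, (∀ z, |f z| ≤ 1) ∧ LipschitzWith 1 f ∧
        r = |(∫ x, (∫ t in Set.Ici (0 : ℝ), l1 * Real.exp (-(l1 * t)) * f (S t x)) ∂μ1) -
             ∫ x, (∫ t in Set.Ici (0 : ℝ), l2 * Real.exp (-(l2 * t)) * f (S t x)) ∂μ2|}
      ≤ |l1 - l2| * (1 / l1 + 1 / l2) +
          (1 + L * l2 / (l2 - α)) *
            sSup {r : ℝ | ∃ f : X → ℝ, (∀ z, |f z| ≤ 1) ∧ LipschitzWith 1 f ∧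
              r = |(∫ x, f x ∂μ1) - ∫ x, f x ∂μ2|} := by
  have hS : ∀ x, ContinuousOn (S · x) (Ici 0) := fun x =>
    hScont.comp (continuous_id.prodMk continuous_const).continuousOn
      fun t ht => ⟨ht, mem_univ x⟩
  have hS_lip :
      ∀ t, 0 ≤ t → ∀ x y, dist (S t x) (S t y) ≤ L * exp (α * t) * dist x y := by
    simpa only [Subtype.dist_eq, dist_eq_norm] using hA2
  obtain ⟨hl1_pos, hl1α⟩ := max_lt_iff.1 hl1
  obtain ⟨hl2_pos, hl2α⟩ := max_lt_iff.1 hl2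
  have hK : 0 ≤ L * l2 / (l2 - α) := div_nonneg (by positivity) (sub_pos.2 hl2α).le
  refine Real.sSup_le ?_ (add_nonneg (by positivity)
    (mul_nonneg (by linarith) fortetMourierDist_nonneg))
  rintro _ ⟨f, hf_bdd, hf, rfl⟩
  have hG1 := integrable_resolventAverage (μ := μ1) hl1_pos hl1α hS hS_lip hf hf_bdd
  have hG2 := integrable_resolventAverage (μ := μ1) hl2_pos hl2α hS hS_lip hf hf_bdd
  calc |(∫ x, resolventAverage S l1 f x ∂μ1) - ∫ x, resolventAverage S l2 f x ∂μ2|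
      ≤ |(∫ x, resolventAverage S l1 f x ∂μ1) - ∫ x, resolventAverage S l2 f x ∂μ1|
        + |(∫ x, resolventAverage S l2 f x ∂μ1) - ∫ x, resolventAverage S l2 f x ∂μ2| :=
        abs_sub_le _ _ _
    _ ≤ |l1 - l2| * (1 / l1 + 1 / l2) + (1 + L * l2 / (l2 - α)) * fortetMourierDist μ1 μ2 := by
        gcongr
        · refine abs_integral_sub_integral_le_of_abs_sub_le hG1 hG2 fun x => ?_
          simpa only [one_mul] using abs_resolventAverage_sub_resolventAverage_le hl1_pos hl2_pos
            (hS x) hf.continuous hf_bdd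
        · refine abs_integral_sub_integral_le_mul_fortetMourierDist (by linarith)
            (fun z => (abs_resolventAverage_le hl2_pos z hf_bdd).trans (by linarith))
            fun x y => ?_
          have := dist_resolventAverage_le hl2_pos hl2α hS hS_lip hf hf_bdd x y
          rw [NNReal.coe_one, one_mul] at this
          exact this.trans (by gcongr; linarith)

/-- Under (A2), for all `λ₁, λ₂ > ᾱ` and Borel probability measures
`μ₁, μ₂` on `X`:
`‖μ₁G_{λ₁} − μ₂G_{λ₂}‖_FM ≤ |λ₁−λ₂|(1/λ₁+1/λ₂) + (1 + Lλ₂/(λ₂−α)) ‖μ₁−μ₂‖_FM`,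
where `⟨f, μG_λ⟩ = ∫_X ∫₀^∞ λ e^{−λt} f(S(t,x)) dt μ(dx)` and the FM norms are suprema
over test functions `f` bounded by 1 and 1-Lipschitz. -/
theorem stmt_15
    {H : Type*} [NormedAddCommGroup H] [NormedSpace ℝ H] [CompleteSpace H]
    [SecondCountableTopology H] [MeasurableSpace H] [BorelSpace H]
    (X : Set H) (hXc : IsClosed X) (hXne : X.Nonempty)
    (S : ℝ → X → X)
    (hS0 : ∀ x, S 0 x = x)
    (hSadd : ∀ s t : ℝ, 0 ≤ s → 0 ≤ t → ∀ x, S (s + t) x = S s (S t x))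
    (hScont : ContinuousOn (fun q : ℝ × X => S q.1 q.2) (Set.Ici 0 ×ˢ Set.univ))
    (L α : ℝ) (hL : 0 < L)
    (hA2 : ∀ t : ℝ, 0 ≤ t → ∀ x y : X,
      ‖(S t x : H) - S t y‖ ≤ L * Real.exp (α * t) * ‖(x : H) - y‖)
    (l1 l2 : ℝ) (hl1 : max 0 α < l1) (hl2 : max 0 α < l2)
    (μ1 μ2 : Measure X) [IsProbabilityMeasure μ1] [IsProbabilityMeasure μ2] :
    sSup {r : ℝ | ∃ f : X → ℝ, (∀ z, |f z| ≤ 1) ∧ LipschitzWith 1 f ∧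
        r = |(∫ x, (∫ t in Set.Ici (0 : ℝ), l1 * Real.exp (-(l1 * t)) * f (S t x)) ∂μ1) -
             ∫ x, (∫ t in Set.Ici (0 : ℝ), l2 * Real.exp (-(l2 * t)) * f (S t x)) ∂μ2|}
      ≤ |l1 - l2| * (1 / l1 + 1 / l2) +
          (1 + L * l2 / (l2 - α)) *
            sSup {r : ℝ | ∃ f : X → ℝ, (∀ z, |f z| ≤ 1) ∧ LipschitzWith 1 f ∧
              r = |(∫ x, f x ∂μ1) - ∫ x, f x ∂μ2|} :=
  stmt_15_general X S hScont L α hL hA2 l1 l2 hl1 hl2 μ1 μ2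
end
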